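/- Let K be a field and let R be an infinite-dimensional affine K-algebra without zero divisors. If R is paradoxical, then for every K-basis {e_i}_{i=1}^∞ of R there is no invariant finitely additive dimension-measure on R with respect to {e_i}_{i=1}^∞. -/

import Mathlib

/-- A subset `L ⊆ R` is regular with respect to the basis enumeration `e : ℕ → R` if it is
linearly independent over `K` and is a finite disjoint union of sets of the form `Aᵢ·rᵢ`
with `Aᵢ` a subset of the basis and `rᵢ ∈ R`. -/
def RegularSubset (K : Type*) [Field K] {R : Type*} [Ring R] [Algebra K R]
    (e : ℕ → R) (L : Set R) : Prop :=
  LinearIndependent K ((↑) : L → R) ∧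
  ∃ (n : ℕ) (A : Fin n → Set R) (r : Fin n → R),
    (∀ i, A i ⊆ Set.range e) ∧
    L = ⋃ i, (fun a => a * r i) '' A i ∧
    Pairwise fun i j => Disjoint ((fun a => a * r i) '' A i) ((fun a => a * r j) '' A j)

/-- An invariant finitely additive dimension-measure with respect to a basis enumeration
`e : ℕ → R`: a nonnegative function on regular subsets with `μ({eᵢ}) = 1`, `μ ≤ 1`, finitely
additive on disjoint regular sets, and invariant under right multiplication by nonzero
elements. -/
def DimensionMeasure (K : Type*) [Field K] {R : Type*} [Ring R] [Algebra K R]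
    (e : ℕ → R) (μ : Set R → ℝ) : Prop :=
  (∀ L : Set R, RegularSubset K e L → 0 ≤ μ L) ∧
  μ (Set.range e) = 1 ∧
  (∀ A : Set R, RegularSubset K e A → μ A ≤ 1) ∧
  (∀ A B : Set R, RegularSubset K e A → RegularSubset K e B → Disjoint A B →
    RegularSubset K e (A ∪ B) → μ (A ∪ B) = μ A + μ B) ∧
  (∀ (A : Set R) (r : R), RegularSubset K e A → r ≠ 0 →
    μ ((fun a => a * r) '' A) = μ A)

/-- `R` is paradoxical if every `K`-basis `{fᵢ}` of `R` indexed by `ℕ` can be partitioned into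
finitely many pieces `A₁, …, A_m` for which there exist nonzero `g₁, h₁, …, g_m, h_m ∈ R` such
that the combined family of elements `a·gⱼ` and `a·hⱼ` (`a ∈ Aⱼ`) is linearly independent. -/
def ParadoxicalAlgebra (K : Type*) [Field K] (R : Type*) [Ring R] [Algebra K R] : Prop :=
  ∀ f : Module.Basis ℕ K R, ∃ (m : ℕ) (A : Fin m → Set ℕ) (g h : Fin m → R),
    (∀ i, g i ≠ 0) ∧ (∀ i, h i ≠ 0) ∧
    (⋃ i, A i) = Set.univ ∧
    Pairwise (Function.onFun Disjoint A) ∧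
    LinearIndependent K (fun p : (i : Fin m) × (↥(A i) × Bool) =>
      f (p.2.1 : ℕ) * (cond p.2.2 (g p.1) (h p.1)))

section Helpers

variable {K R : Type*} [Field K] [Ring R] [Algebra K R] (e : ℕ → R)

lemma regular_empty : RegularSubset K e (∅ : Set R) := by
  refine ⟨linearIndependent_empty K R, 0, Fin.elim0, Fin.elim0, fun i => i.elim0, ?_, ?_⟩
  · simp
  · intro i; exact i.elim0

lemma regular_iUnion {J : Type*} [Fintype J] (A : J → Set R) (r : J → R)
    (hA : ∀ j, A j ⊆ Set.range e)
    (hli : LinearIndependent K ((↑) : (⋃ j, (fun a => a * r j) '' A j) → R))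
    (hd : Pairwise fun j j' => Disjoint ((fun a => a * r j) '' A j) ((fun a => a * r j') '' A j')) :
    RegularSubset K e (⋃ j, (fun a => a * r j) '' A j) := by
  classical
  let σ := Fintype.equivFin J
  refine ⟨hli, Fintype.card J, A ∘ σ.symm, r ∘ σ.symm, fun i => hA _, ?_, ?_⟩
  · exact (σ.symm.surjective.iUnion_comp fun j => (fun a => a * r j) '' A j).symm
  · intro i i' hii'
    exact hd (σ.symm.injective.ne hii')

lemma regular_of_subset_range {S : Set R}
    (hli : LinearIndependent K ((↑) : (Set.range e) → R)) (hS : S ⊆ Set.range e) :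
    RegularSubset K e S := by
  refine ⟨hli.comp (Set.inclusion hS) (Set.inclusion_injective hS), 1, fun _ => S, fun _ => 1, fun _ => hS, ?_, ?_⟩
  · simp [mul_one, Set.image_id', Set.iUnion_const]
  · intro i j hij
    exact absurd (Subsingleton.elim i j) hij

lemma measure_empty {μ : Set R → ℝ} (hμ : DimensionMeasure K e μ) : μ (∅ : Set R) = 0 := by
  obtain ⟨-, -, -, hadd, -⟩ := hμ
  have := hadd ∅ ∅ (regular_empty e) (regular_empty e) (Set.empty_disjoint _)
    (by simpa using regular_empty (K := K) e)
  simp at this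
  linarith

lemma measure_biUnion {μ : Set R → ℝ} (hμ : DimensionMeasure K e μ) {J : Type*} [DecidableEq J]
    (T : J → Set R) (t : Finset J)
    (hreg : ∀ s : Finset J, s ⊆ t → RegularSubset K e (⋃ j ∈ s, T j))
    (hd : ∀ j ∈ t, ∀ j' ∈ t, j ≠ j' → Disjoint (T j) (T j')) :
    μ (⋃ j ∈ t, T j) = ∑ j ∈ t, μ (T j) := by
  induction t using Finset.induction_on with
  | empty => simpa using measure_empty e hμ
  | insert a s ha ih =>
    obtain ⟨-, -, -, hadd, -⟩ := hμ
    have hTa : T a = ⋃ j ∈ ({a} : Finset J), T j := by simp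
    have hdisj : Disjoint (T a) (⋃ j ∈ s, T j) := by
      rw [Set.disjoint_iUnion₂_right]
      intro j hj
      exact hd a (Finset.mem_insert_self a s) j (Finset.mem_insert_of_mem hj)
        (fun h => ha (h ▸ hj))
    rw [Finset.set_biUnion_insert, Finset.sum_insert ha,
      hadd (T a) (⋃ j ∈ s, T j)
        (hTa ▸ hreg {a} (by simp))
        (hreg s (Finset.subset_insert a s))
        hdisj
        (by rw [← Finset.set_biUnion_insert]; exact hreg _ le_rfl),
      ih (fun u hu => hreg u (hu.trans (Finset.subset_insert a s)))
        (fun j hj j' hj' h => hd j (Finset.mem_insert_of_mem hj) j'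
          (Finset.mem_insert_of_mem hj') h)]

end Helpers


/-- If an infinite dimensional affine algebra without zero divisors is paradoxical, then for
every basis `{eᵢ}` there is no invariant finitely additive dimension-measure on `R` with
respect to `{eᵢ}`. -/
theorem paradoxical_no_dimension_measure (K : Type*) [Field K] (R : Type*) [Ring R]
    [Algebra K R] [Algebra.FiniteType K R] [NoZeroDivisors R]
    (hinf : ¬ FiniteDimensional K R)
    (hpar : ParadoxicalAlgebra K R) :
    ∀ e : Module.Basis ℕ K R, ¬ ∃ μ : Set R → ℝ, DimensionMeasure K ⇑e μ := by
  classical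
  intro e
  rintro ⟨μ, hμ⟩
  have hμ' := hμ
  obtain ⟨m, A, g, h, hg, hh, hcov, hdA, hli⟩ := hpar e
  obtain ⟨hpos, hone, hle, hadd, hinv⟩ := hμ
  set c : Fin m × Bool → R := fun j => cond j.2 (g j.1) (h j.1) with hcdef
  have hc0 : ∀ j, c j ≠ 0 := by
    rintro ⟨i, b⟩
    cases b
    · exact hh i
    · exact hg i
  set F : ((i : Fin m) × (↥(A i) × Bool)) → R :=
    fun p => e (p.2.1 : ℕ) * (cond p.2.2 (g p.1) (h p.1)) with hFdef
  set T : Fin m × Bool → Set R := fun j => (fun a => a * c j) '' (⇑e '' A j.1) with hTdef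
  -- The union of the T's is the range of F
  have hrange : (⋃ j, T j) = Set.range F := by
    ext x
    constructor
    · intro hx
      rw [Set.mem_iUnion] at hx
      obtain ⟨⟨i, b⟩, ⟨y, ⟨a, ha, rfl⟩, rfl⟩⟩ := hx
      exact ⟨⟨i, ⟨⟨a, ha⟩, b⟩⟩, rfl⟩
    · rintro ⟨⟨i, ⟨⟨a, ha⟩, b⟩⟩, rfl⟩
      rw [Set.mem_iUnion]
      exact ⟨⟨i, b⟩, ⟨e a, ⟨a, ha, rfl⟩, rfl⟩⟩
  have hliU : LinearIndependent K ((↑) : (⋃ j, T j) → R) := by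
    rw [hrange]; exact hli.linearIndepOn_id
  have hFinj : Function.Injective F := hli.injective
  have hTd : Pairwise fun j j' => Disjoint (T j) (T j') := by
    rintro ⟨i, b⟩ ⟨i', b'⟩ hne
    rw [Set.disjoint_left]
    rintro x ⟨y, ⟨a, ha, rfl⟩, rfl⟩ ⟨y', ⟨a', ha', rfl⟩, hx⟩
    have heq : F ⟨i', ⟨⟨a', ha'⟩, b'⟩⟩ = F ⟨i, ⟨⟨a, ha⟩, b⟩⟩ := hx
    have := hFinj heq
    apply hne
    obtain ⟨h1, h2⟩ := Sigma.mk.inj_iff.mp this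
    subst h1
    have h3 := eq_of_heq h2
    have : b' = b := congrArg Prod.snd h3
    simp [this]
  have hrli : LinearIndependent K ((↑) : (Set.range ⇑e) → R) := e.linearIndependent.linearIndepOn_id
  have heinj : Function.Injective ⇑e := e.injective
  -- regularity of sub-unions of the T's
  have hTreg : ∀ s : Finset (Fin m × Bool), RegularSubset K ⇑e (⋃ j ∈ s, T j) := by
    intro s
    have heq : (⋃ j ∈ s, T j)
        = ⋃ j, (fun a => a * c j) '' (if j ∈ s then ⇑e '' A j.1 else ∅) := by
      ext x
      simp only [Set.mem_iUnion, apply_ite (Set.image fun a => a * c _), Set.image_empty]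
      constructor
      · rintro ⟨j, hj, hx⟩
        exact ⟨j, by rw [if_pos hj]; exact hx⟩
      · rintro ⟨j, hx⟩
        by_cases hj : j ∈ s
        · rw [if_pos hj] at hx; exact ⟨j, hj, hx⟩
        · rw [if_neg hj] at hx; simp at hx
    rw [heq]
    apply regular_iUnion
    · intro j
      split_ifs
      · exact Set.image_subset_range _ _
      · exact Set.empty_subset _
    · rw [← heq]
      exact hliU.comp (Set.inclusion (Set.iUnion₂_subset fun j _ => Set.subset_iUnion T j))
          (Set.inclusion_injective _)
    · intro j j' hne
      by_cases hj : j ∈ s <;> by_cases hj' : j' ∈ s <;>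
        simp only [hj, hj', if_true, if_false, Set.image_empty]
      · exact hTd hne
      · exact Set.disjoint_empty _
      · exact Set.empty_disjoint _
      · exact Set.empty_disjoint _
  -- regularity of subsets of the range of e
  have hBreg : ∀ S : Set R, S ⊆ Set.range ⇑e → RegularSubset K ⇑e S :=
    fun S hS => regular_of_subset_range ⇑e hrli hS
  set B : Fin m → Set R := fun i => ⇑e '' A i with hBdef
  have hBsub : ∀ i, B i ⊆ Set.range ⇑e := fun i => Set.image_subset_range _ _
  have hBU : (⋃ i ∈ (Finset.univ : Finset (Fin m)), B i) = Set.range ⇑e := by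
    rw [show (⋃ i ∈ (Finset.univ : Finset (Fin m)), B i) = ⋃ i, B i by simp]
    rw [hBdef, ← Set.image_iUnion, hcov, Set.image_univ]
  have hBd : ∀ ⦃i j : Fin m⦄, i ≠ j → Disjoint (B i) (B j) := by
    intro i j hne
    exact (Set.disjoint_image_iff heinj).mpr (hdA hne)
  have hsum1 : μ (Set.range ⇑e) = ∑ i : Fin m, μ (B i) := by
    rw [← hBU]
    exact measure_biUnion ⇑e hμ' B Finset.univ
      (fun s _ => hBreg _ (Set.iUnion₂_subset fun j _ => hBsub j))
      (fun j _ j' _ hne => hBd hne)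
  have hTμ : ∀ j, μ (T j) = μ (B j.1) := fun j =>
    hinv (B j.1) (c j) (hBreg _ (hBsub _)) (hc0 j)
  have hsum2 : μ (⋃ j ∈ (Finset.univ : Finset (Fin m × Bool)), T j)
      = ∑ j : Fin m × Bool, μ (T j) :=
    measure_biUnion ⇑e hμ' T Finset.univ (fun s _ => hTreg s) (fun j _ j' _ hne => hTd hne)
  have h2 : ∑ j : Fin m × Bool, μ (T j) = 2 * μ (Set.range ⇑e) := by
    calc ∑ j : Fin m × Bool, μ (T j) = ∑ j : Fin m × Bool, μ (B j.1) := by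
          exact Finset.sum_congr rfl fun j _ => hTμ j
      _ = ∑ i : Fin m, ∑ _b : Bool, μ (B i) := Fintype.sum_prod_type (fun j => μ (B j.1))
      _ = ∑ i : Fin m, 2 * μ (B i) := by simp [two_mul]
      _ = 2 * ∑ i : Fin m, μ (B i) := (Finset.mul_sum _ _ _).symm
      _ = 2 * μ (Set.range ⇑e) := by rw [hsum1]
  have hle2 : μ (⋃ j ∈ (Finset.univ : Finset (Fin m × Bool)), T j) ≤ 1 :=
    hle _ (hTreg Finset.univ)
  rw [hsum2, h2, hone] at hle2
  linarith
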